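/- arXiv:2406.18042 — 5 statements merged into one kernel-verified Lean document; each statement's English description precedes it below -/
import Mathlib

section
/- Let d ≥ 2 be a square-free natural number. Then the generalized Pell equation x² - d y² = 4 has a solution in natural numbers (x, y) with x ≥ 3 and y ≥ 1. -/
/-- For a square-free natural `d ≥ 2`, the generalized Pell equation
`x² - d y² = 4` has a nontrivial solution with `x ≥ 3`, `y ≥ 1`. -/
theorem pell_four_has_nontrivial_solution (d : ℕ) (hd : 2 ≤ d) (hsq : Squarefree d) :
    ∃ x y : ℕ, 3 ≤ x ∧ 1 ≤ y ∧ (x : ℤ) ^ 2 - (d : ℤ) * (y : ℤ) ^ 2 = 4 := by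
  have h₀ : (0 : ℤ) < (d : ℤ) := by exact_mod_cast (by omega : 0 < d)
  have hns : ¬IsSquare ((d : ℤ)) := by
    rw [Int.isSquare_natCast_iff]
    rintro ⟨r, hr⟩
    have := hsq r (by rw [hr])
    rw [Nat.isUnit_iff] at this
    subst this
    omega
  obtain ⟨a, hx, hy⟩ := Pell.Solution₁.exists_pos_of_not_isSquare h₀ hns
  have hp := a.prop
  lift a.x to ℕ using by positivity with ax
  lift a.y to ℕ using hy.le with ay
  refine ⟨2 * ax, 2 * ay, ?_, ?_, ?_⟩
  · have : 2 ≤ ax := by exact_mod_cast hx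
    omega
  · have : 1 ≤ ay := by exact_mod_cast hy
    omega
  · push_cast
    ring_nf
    ring_nf at hp
    linarith
end

section
/- Let d_2, ..., d_n be pairwise coprime square-free natural numbers, each at least 2, and for each j let (m_j, k_j) be natural numbers with m_j ≥ 3, k_j ≥ 1, and m_j² - d_j k_j² = 4. Set s_j = (m_j + k_j √(d_j))/2. Then for any ε_j ∈ {-1, 0, 1}, if the product over j of s_j^{ε_j} equals 1, then every ε_j = 0. -/
open Finset
open scoped symmDiff

noncomputable def genRad (d : ℕ → ℕ) (S : Finset ℕ) : ℝ :=
  Real.sqrt ((∏ j ∈ S, d j : ℕ) : ℝ)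

noncomputable def RR (d : ℕ → ℕ) (D : Finset ℕ) : Submodule ℚ ℝ :=
  Submodule.span ℚ (genRad d '' {S : Finset ℕ | S ⊆ D})

lemma genRad_empty (d : ℕ → ℕ) : genRad d ∅ = 1 := by simp [genRad]

lemma genRad_mem {d : ℕ → ℕ} {S D : Finset ℕ} (h : S ⊆ D) : genRad d S ∈ RR d D :=
  Submodule.subset_span ⟨S, h, rfl⟩

lemma one_mem_RR (d : ℕ → ℕ) (D : Finset ℕ) : (1 : ℝ) ∈ RR d D := by
  simpa [genRad_empty] using genRad_mem (d := d) (empty_subset D)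

lemma ratCast_mem_RR (d : ℕ → ℕ) (D : Finset ℕ) (q : ℚ) : (q : ℝ) ∈ RR d D := by
  simpa [Rat.smul_def] using (RR d D).smul_mem q (one_mem_RR d D)

lemma genRad_mul_genRad (d : ℕ → ℕ) (S S' : Finset ℕ) :
    genRad d S * genRad d S' =
      ((∏ j ∈ S ∩ S', d j : ℕ) : ℝ) * genRad d (S ∆ S') := by
  classical
  have hnat : (∏ j ∈ S, d j) * (∏ j ∈ S', d j)
      = (∏ j ∈ S ∩ S', d j) ^ 2 * (∏ j ∈ S ∆ S', d j) := by
    have h1 : (S ∆ S') ∪ (S ∩ S') = S ∪ S' := by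
      simpa using symmDiff_sup_inf (a := S) (b := S')
    have h2 : Disjoint (S ∆ S') (S ∩ S') := disjoint_symmDiff_inf S S'
    have h3 : (∏ j ∈ S ∪ S', d j) * ∏ j ∈ S ∩ S', d j
        = (∏ j ∈ S, d j) * ∏ j ∈ S', d j := Finset.prod_union_inter
    rw [← h3, ← h1, Finset.prod_union h2]
    ring
  unfold genRad
  rw [← Real.sqrt_mul (by positivity), ← Nat.cast_mul, hnat]
  push_cast
  rw [Real.sqrt_mul (by positivity), Real.sqrt_sq (by positivity)]

lemma mul_mem_RR {d : ℕ → ℕ} {D : Finset ℕ} {x y : ℝ}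
    (hx : x ∈ RR d D) (hy : y ∈ RR d D) : x * y ∈ RR d D := by
  classical
  induction hx using Submodule.span_induction with
  | mem a ha =>
    obtain ⟨S, hS, rfl⟩ := ha
    induction hy using Submodule.span_induction with
    | mem b hb =>
      obtain ⟨S', hS', rfl⟩ := hb
      rw [genRad_mul_genRad]
      have : ((∏ j ∈ S ∩ S', d j : ℕ) : ℝ) * genRad d (S ∆ S')
          = ((∏ j ∈ S ∩ S', d j : ℕ) : ℚ) • genRad d (S ∆ S') := by
        rw [Rat.smul_def]; push_cast; ring
      rw [this]
      exact (RR d D).smul_mem _ (genRad_mem (le_trans symmDiff_le_sup (sup_le hS hS')))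
    | zero => simpa using (RR d D).zero_mem
    | add b c hb hc ihb ihc => rw [mul_add]; exact (RR d D).add_mem ihb ihc
    | smul q b hb ihb => rw [mul_smul_comm]; exact (RR d D).smul_mem _ ihb
  | zero => simpa using (RR d D).zero_mem
  | add a b ha hb iha ihb => rw [add_mul]; exact (RR d D).add_mem iha ihb
  | smul q a ha iha => rw [smul_mul_assoc]; exact (RR d D).smul_mem _ iha

lemma RR_decomp {d : ℕ → ℕ} {D : Finset ℕ} {t : ℕ} {x : ℝ}
    (hx : x ∈ RR d (insert t D)) :
    ∃ a b : ℝ, a ∈ RR d D ∧ b ∈ RR d D ∧ x = a + b * Real.sqrt (d t) := by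
  classical
  induction hx using Submodule.span_induction with
  | mem z hz =>
    obtain ⟨S, hS, rfl⟩ := hz
    by_cases htS : t ∈ S
    · refine ⟨0, genRad d (S.erase t), (RR d D).zero_mem, ?_, ?_⟩
      · apply genRad_mem
        intro x hx
        have hx1 := Finset.mem_of_mem_erase hx
        have hx2 := Finset.ne_of_mem_erase hx
        have := hS hx1
        rcases Finset.mem_insert.mp this with h | h
        · exact absurd h hx2
        · exact h
      · have : genRad d S = genRad d (S.erase t) * Real.sqrt (d t) := by
          have hp : (∏ j ∈ S, d j) = (∏ j ∈ S.erase t, d j) * d t :=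
            (Finset.prod_erase_mul S _ htS).symm
          unfold genRad
          rw [hp, Nat.cast_mul, Real.sqrt_mul (by positivity)]
        rw [this]; ring
    · refine ⟨genRad d S, 0, genRad_mem ?_, (RR d D).zero_mem, by ring⟩
      intro x hx
      rcases Finset.mem_insert.mp (hS hx) with h | h
      · exact absurd (h ▸ hx) htS
      · exact h
  | zero => exact ⟨0, 0, (RR d D).zero_mem, (RR d D).zero_mem, by ring⟩
  | add a b ha hb iha ihb =>
    obtain ⟨a1, b1, h1, h2, rfl⟩ := iha
    obtain ⟨a2, b2, h3, h4, rfl⟩ := ihb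
    exact ⟨a1 + a2, b1 + b2, (RR d D).add_mem h1 h3, (RR d D).add_mem h2 h4, by ring⟩
  | smul q a ha iha =>
    obtain ⟨a1, b1, h1, h2, rfl⟩ := iha
    exact ⟨q • a1, q • b1, (RR d D).smul_mem _ h1, (RR d D).smul_mem _ h2, by
      rw [Rat.smul_def, Rat.smul_def, Rat.smul_def]; ring⟩

lemma RR_empty {d : ℕ → ℕ} {x : ℝ} (hx : x ∈ RR d ∅) : ∃ q : ℚ, x = q := by
  have hset : {S : Finset ℕ | S ⊆ (∅ : Finset ℕ)} = {∅} := by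
    ext S; simp [Finset.subset_empty]
  rw [RR, hset, Set.image_singleton, genRad_empty] at hx
  obtain ⟨q, hq⟩ := Submodule.mem_span_singleton.mp hx
  exact ⟨q, by rw [← hq, Rat.smul_def, mul_one]⟩

lemma natCast_mem_RR (d : ℕ → ℕ) (D : Finset ℕ) (a : ℕ) : (a : ℝ) ∈ RR d D := by
  simpa using ratCast_mem_RR d D (a : ℚ)

lemma key_lemma (d : ℕ → ℕ) : ∀ D : Finset ℕ,
    (∀ j ∈ D, Squarefree (d j)) → (∀ j ∈ D, 2 ≤ d j) →
    (∀ i ∈ D, ∀ j ∈ D, i ≠ j → Nat.Coprime (d i) (d j)) →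
    ∀ e : ℕ, Squarefree e → 2 ≤ e → (∀ j ∈ D, Nat.Coprime e (d j)) →
    ∀ x y : ℝ, x ∈ RR d D → y ∈ RR d D → y * Real.sqrt e = x → y = 0 ∧ x = 0 := by
  classical
  intro D
  induction D using Finset.induction_on with
  | empty =>
    intro _ _ _ e hesq he2 _ x y hx hy hxy
    obtain ⟨qx, rfl⟩ := RR_empty hx
    obtain ⟨qy, rfl⟩ := RR_empty hy
    by_cases hqy : qy = 0
    · subst hqy
      have h0 : (qx : ℝ) = 0 := by simpa using hxy.symm
      simp [h0]
    · exfalso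
      have hns : ¬ IsSquare e := by
        rintro ⟨r, rfl⟩
        have hr := Nat.isUnit_iff.mp (hesq r (dvd_refl _))
        subst hr
        omega
      have hirr : Irrational (Real.sqrt e) := irrational_sqrt_natCast_iff.mpr hns
      apply hirr
      refine ⟨qx / qy, ?_⟩
      have hqy' : (qy : ℝ) ≠ 0 := by exact_mod_cast hqy
      push_cast
      field_simp
      linarith [hxy]
  | @insert t D' ht ih =>
    intro hsq hd hcop e hesq he2 hecop x y hx hy hxy
    have hsq' : ∀ j ∈ D', Squarefree (d j) := fun j hj => hsq j (mem_insert_of_mem hj)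
    have hd' : ∀ j ∈ D', 2 ≤ d j := fun j hj => hd j (mem_insert_of_mem hj)
    have hcop' : ∀ i ∈ D', ∀ j ∈ D', i ≠ j → Nat.Coprime (d i) (d j) :=
      fun i hi j hj hij => hcop i (mem_insert_of_mem hi) j (mem_insert_of_mem hj) hij
    have hdtsq : Squarefree (d t) := hsq t (mem_insert_self t D')
    have hdt2 : 2 ≤ d t := hd t (mem_insert_self t D')
    have hdtcop : ∀ j ∈ D', Nat.Coprime (d t) (d j) := fun j hj =>
      hcop t (mem_insert_self t D') j (mem_insert_of_mem hj) (fun h => ht (h ▸ hj))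
    have IHdt := ih hsq' hd' hcop' (d t) hdtsq hdt2 hdtcop
    have IHe := ih hsq' hd' hcop' e hesq he2 (fun j hj => hecop j (mem_insert_of_mem hj))
    obtain ⟨p, q, hp, hq, rfl⟩ := RR_decomp hx
    obtain ⟨u, v, hu, hv, rfl⟩ := RR_decomp hy
    set α := Real.sqrt (d t) with hαdef
    have hα2 : α * α = (d t : ℝ) := Real.mul_self_sqrt (by positivity)
    suffices hy0 : u + v * α = 0 by
      refine ⟨hy0, ?_⟩; rw [← hxy, hy0, zero_mul]
    by_cases hw : u * u - v * v * (d t : ℝ) = 0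
    · have h1 : (v * α - u) * (v * α + u) = 0 := by linear_combination - hw + v * v * hα2
      rcases mul_eq_zero.mp h1 with h | h
      · obtain ⟨hv0, hu0⟩ := IHdt u v hu hv (by linarith)
        rw [hv0, hu0]; ring
      · obtain ⟨hv0, hu0⟩ := IHdt (-u) v (neg_mem hu) hv (by linarith)
        rw [hv0]
        have : u = 0 := by linarith [hu0]
        rw [this]; ring
    · exfalso
      set s := Real.sqrt e with hsdef
      have hse : s * s = (e : ℝ) := Real.mul_self_sqrt (by positivity)
      set w := u * u - v * v * (d t : ℝ) with hwdef
      set x' := u * p - v * q * (d t : ℝ) with hx'def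
      set y' := u * q - v * p with hy'def
      have hdtmem : ((d t : ℕ) : ℝ) ∈ RR d D' := natCast_mem_RR d D' (d t)
      have hemem : ((e : ℕ) : ℝ) ∈ RR d D' := natCast_mem_RR d D' e
      have hwmem : w ∈ RR d D' :=
        sub_mem (mul_mem_RR hu hu) (mul_mem_RR (mul_mem_RR hv hv) hdtmem)
      have hx'mem : x' ∈ RR d D' :=
        sub_mem (mul_mem_RR hu hp) (mul_mem_RR (mul_mem_RR hv hq) hdtmem)
      have hy'mem : y' ∈ RR d D' := sub_mem (mul_mem_RR hu hq) (mul_mem_RR hv hp)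
      have heq2 : w * s = x' + y' * α := by
        linear_combination (u - v * α) * hxy + (v * v * s - v * q) * hα2
      have hsq2 : (2 * (x' * y')) * α = w * w * (e : ℝ) - x' * x' - y' * y' * (d t : ℝ) := by
        linear_combination (-(w * s + x' + y' * α)) * heq2 + (w * w) * hse - (y' * y') * hα2
      have h2mem : (2 : ℝ) ∈ RR d D' := by
        have := natCast_mem_RR d D' 2
        simpa using this
      have h2 := IHdt _ _
        (sub_mem (sub_mem (mul_mem_RR (mul_mem_RR hwmem hwmem) hemem)
          (mul_mem_RR hx'mem hx'mem)) (mul_mem_RR (mul_mem_RR hy'mem hy'mem) hdtmem))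
        (mul_mem_RR h2mem (mul_mem_RR hx'mem hy'mem)) hsq2
      have hprod0 : x' * y' = 0 := by linarith [h2.1]
      rcases mul_eq_zero.mp hprod0 with hx'0 | hy'0
      · -- x' = 0 : w * sqrt(e * d t) = y' * d t
        have hmul : Real.sqrt (((e * d t : ℕ)) : ℝ) = s * α := by
          push_cast
          rw [hsdef, hαdef, ← Real.sqrt_mul (by positivity)]
        have heq3 : w * Real.sqrt (((e * d t : ℕ)) : ℝ) = y' * (d t : ℝ) := by
          rw [hmul]
          calc w * (s * α) = (w * s) * α := by ring
            _ = (x' + y' * α) * α := by rw [heq2]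
            _ = y' * (d t : ℝ) := by rw [hx'0]; linear_combination y' * hα2
        have hcop2 : ∀ j ∈ D', Nat.Coprime (e * d t) (d j) := fun j hj =>
          Nat.Coprime.mul (hecop j (mem_insert_of_mem hj)) (hdtcop j hj)
        have hsq3 : Squarefree (e * d t) :=
          (Nat.squarefree_mul (hecop t (mem_insert_self t D'))).mpr ⟨hesq, hdtsq⟩
        have h3 := ih hsq' hd' hcop' (e * d t) hsq3
          (le_trans he2 (Nat.le_mul_of_pos_right e (by omega))) hcop2
          (y' * (d t : ℝ)) w (mul_mem_RR hy'mem hdtmem) hwmem heq3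
        exact hw h3.1
      · -- y' = 0 : w * sqrt e = x'
        have h3 := IHe x' w hx'mem hwmem (by rw [heq2, hy'0]; ring)
        exact hw h3.1

lemma pell_prod_ne (n : ℕ) (d m k : ℕ → ℕ)
    (hcop : ∀ i ∈ Finset.Icc 2 n, ∀ j ∈ Finset.Icc 2 n, i ≠ j → Nat.Coprime (d i) (d j))
    (hsq : ∀ j ∈ Finset.Icc 2 n, Squarefree (d j))
    (hd : ∀ j ∈ Finset.Icc 2 n, 2 ≤ d j)
    (hm : ∀ j ∈ Finset.Icc 2 n, 3 ≤ m j)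
    (hk : ∀ j ∈ Finset.Icc 2 n, 1 ≤ k j)
    (P N : Finset ℕ) (hP : P ⊆ Finset.Icc 2 n) (hN : N ⊆ Finset.Icc 2 n)
    (t : ℕ) (htP : t ∈ P) (htN : t ∉ N)
    (heq : ∏ j ∈ P, (((m j : ℝ) + (k j : ℝ) * Real.sqrt (d j)) / 2)
         = ∏ j ∈ N, (((m j : ℝ) + (k j : ℝ) * Real.sqrt (d j)) / 2)) : False := by
  classical
  set s : ℕ → ℝ := fun j => (((m j : ℝ) + (k j : ℝ) * Real.sqrt (d j)) / 2) with hsdef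
  set D : Finset ℕ := (Finset.Icc 2 n).erase t with hDdef
  have htIcc : t ∈ Finset.Icc 2 n := hP htP
  have hDIcc : D ⊆ Finset.Icc 2 n := Finset.erase_subset _ _
  have spos : ∀ j ∈ Finset.Icc 2 n, 0 < s j := by
    intro j hj
    have h1 : (3 : ℝ) ≤ (m j : ℝ) := by exact_mod_cast hm j hj
    have h2 : 0 ≤ (k j : ℝ) * Real.sqrt (d j) := by positivity
    have : (0:ℝ) < (m j : ℝ) + (k j : ℝ) * Real.sqrt (d j) := by linarith
    simp only [hsdef]
    linarith
  have smem : ∀ j ∈ D, s j ∈ RR d D := by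
    intro j hj
    have hgen : genRad d {j} = Real.sqrt (d j) := by simp [genRad]
    have : s j = (((m j : ℚ)/2 : ℚ)) • (1:ℝ) + (((k j : ℚ)/2 : ℚ)) • genRad d {j} := by
      rw [hgen, Rat.smul_def, Rat.smul_def, hsdef]
      push_cast
      ring
    rw [this]
    exact add_mem ((RR d D).smul_mem _ (one_mem_RR d D))
      ((RR d D).smul_mem _ (genRad_mem (Finset.singleton_subset_iff.mpr hj)))
  have prodmem : ∀ Q : Finset ℕ, Q ⊆ D → (∏ j ∈ Q, s j) ∈ RR d D := by
    intro Q hQ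
    refine Finset.prod_induction s (· ∈ RR d D) (fun a b ha hb => mul_mem_RR ha hb)
      (one_mem_RR d D) (fun j hj => smem j (hQ hj))
  have hPe : P.erase t ⊆ D := Finset.erase_subset_erase t hP
  have hNsub : N ⊆ D := by
    intro x hx
    exact Finset.mem_erase.mpr ⟨fun h => htN (h ▸ hx), hN hx⟩
  set a := ∏ j ∈ P.erase t, s j with hadef
  have hamem : a ∈ RR d D := prodmem _ hPe
  have hBmem : (∏ j ∈ N, s j) ∈ RR d D := prodmem _ hNsub
  have heqP : (∏ j ∈ P, s j) = s t * a := (Finset.mul_prod_erase P s htP).symm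
  set y0 : ℝ := ((k t : ℝ)/2) * a with hy0def
  set x0 : ℝ := (∏ j ∈ N, s j) - ((m t : ℝ)/2) * a with hx0def
  have hy0mem : y0 ∈ RR d D := by
    have : y0 = (((k t : ℚ)/2 : ℚ)) • a := by rw [Rat.smul_def, hy0def]; push_cast; ring
    rw [this]; exact (RR d D).smul_mem _ hamem
  have hx0mem : x0 ∈ RR d D := by
    have : x0 = (∏ j ∈ N, s j) + (-((m t : ℚ)/2 : ℚ)) • a := by
      rw [Rat.smul_def, hx0def]; push_cast; ring
    rw [this]; exact add_mem hBmem ((RR d D).smul_mem _ hamem)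
  have heq0 : y0 * Real.sqrt (d t) = x0 := by
    have h1 : s t * a = ∏ j ∈ N, s j := by rw [← heqP, heq]
    rw [hy0def, hx0def, ← h1, hsdef]
    ring
  have hkey := key_lemma d D (fun j hj => hsq j (hDIcc hj)) (fun j hj => hd j (hDIcc hj))
    (fun i hi j hj hij => hcop i (hDIcc hi) j (hDIcc hj) hij)
    (d t) (hsq t htIcc) (hd t htIcc)
    (fun j hj => hcop t htIcc j (hDIcc hj) (fun h => (Finset.mem_erase.mp hj).1 h.symm))
    x0 y0 hx0mem hy0mem heq0
  have hy0pos : 0 < y0 := by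
    have hapos : 0 < a := Finset.prod_pos (fun j hj => spos j (hDIcc (hPe hj)))
    have hkpos : (0:ℝ) < (k t : ℝ) := by
      have := hk t htIcc; exact_mod_cast Nat.lt_of_lt_of_le Nat.zero_lt_one this
    rw [hy0def]
    positivity
  linarith [hkey.1, hy0pos]

/-- Let `d_j` be pairwise coprime square-free naturals `≥ 2` and `(m_j, k_j)`
nontrivial solutions of `m² - d k² = 4`; set `s_j = (m_j + k_j√(d_j))/2`.
If a product `∏ s_j^{ε_j}` with `ε_j ∈ {-1,0,1}` equals `1`, then all `ε_j = 0`. -/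
theorem pell_units_multiplicatively_independent (n : ℕ) (d m k : ℕ → ℕ)
    (hcop : ∀ i ∈ Finset.Icc 2 n, ∀ j ∈ Finset.Icc 2 n, i ≠ j → Nat.Coprime (d i) (d j))
    (hsq : ∀ j ∈ Finset.Icc 2 n, Squarefree (d j))
    (hd : ∀ j ∈ Finset.Icc 2 n, 2 ≤ d j)
    (hm : ∀ j ∈ Finset.Icc 2 n, 3 ≤ m j)
    (hk : ∀ j ∈ Finset.Icc 2 n, 1 ≤ k j)
    (hpell : ∀ j ∈ Finset.Icc 2 n, (m j) ^ 2 = d j * (k j) ^ 2 + 4)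
    (ε : ℕ → ℤ) (hε : ∀ j, ε j = -1 ∨ ε j = 0 ∨ ε j = 1)
    (hprod : ∏ j ∈ Finset.Icc 2 n,
      (((m j : ℝ) + (k j : ℝ) * Real.sqrt (d j)) / 2) ^ (ε j) = 1) :
    ∀ j ∈ Finset.Icc 2 n, ε j = 0 := by

  classical
  set s : ℕ → ℝ := fun j => (((m j : ℝ) + (k j : ℝ) * Real.sqrt (d j)) / 2) with hsdef
  have spos : ∀ j ∈ Finset.Icc 2 n, 0 < s j := by
    intro j hj
    have h1 : (3 : ℝ) ≤ (m j : ℝ) := by exact_mod_cast hm j hj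
    have h2 : 0 ≤ (k j : ℝ) * Real.sqrt (d j) := by positivity
    simp only [hsdef]
    linarith
  set P : Finset ℕ := (Finset.Icc 2 n).filter (fun i => ε i = 1) with hPdef
  set N : Finset ℕ := (Finset.Icc 2 n).filter (fun i => ε i = -1) with hNdef
  have hPsub : P ⊆ Finset.Icc 2 n := Finset.filter_subset _ _
  have hNsub : N ⊆ Finset.Icc 2 n := Finset.filter_subset _ _
  have hsplit : (∏ j ∈ Finset.Icc 2 n, (s j) ^ (ε j))
      = (∏ j ∈ P, s j) * (∏ j ∈ N, s j)⁻¹ := by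
    have h1 : (∏ j ∈ P, s j) = ∏ j ∈ Finset.Icc 2 n, (if ε j = 1 then s j else 1) :=
      Finset.prod_filter _ _
    have h2 : (∏ j ∈ N, s j)⁻¹ = ∏ j ∈ Finset.Icc 2 n, (if ε j = -1 then (s j)⁻¹ else 1) := by
      rw [← Finset.prod_filter, ← Finset.prod_inv_distrib]
    rw [h1, h2, ← Finset.prod_mul_distrib]
    apply Finset.prod_congr rfl
    intro j hj
    rcases hε j with h | h | h <;> simp [h]
  have hNpos : (0:ℝ) < ∏ j ∈ N, s j := Finset.prod_pos (fun j hj => spos j (hNsub hj))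
  have heqPN : (∏ j ∈ P, s j) = ∏ j ∈ N, s j := by
    have := hprod
    rw [hsplit] at this
    field_simp at this
    linarith [this]
  intro j hj
  by_contra hne
  rcases hε j with h | h | h
  · exact pell_prod_ne n d m k hcop hsq hd hm hk N P hNsub hPsub j
      (Finset.mem_filter.mpr ⟨hj, h⟩)
      (fun hc => by simp [hPdef, Finset.mem_filter, h] at hc)
      heqPN.symm
  · exact hne h
  · exact pell_prod_ne n d m k hcop hsq hd hm hk P N hPsub hNsub j
      (Finset.mem_filter.mpr ⟨hj, h⟩)
      (fun hc => by simp [hNdef, Finset.mem_filter, h] at hc)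
      heqPN
end

section
/- Let d_2, ..., d_n be pairwise coprime square-free natural numbers ≥ 2, and for each j let m_j ≥ 3, k_j ≥ 1 be naturals with m_j² - d_j k_j² = 4. Then the real numbers t_j := log((m_j + √(m_j² - 4))/2) satisfy Hypothesis 1: whenever ε_j ∈ {-1,0,1} and Σ_j ε_j t_j = 0, all ε_j vanish. -/
/-!
Put `α_j = (m_j + k_j √d_j)/2 = exp t_j`, a unit with `α_j⁻¹ = (m_j - k_j √d_j)/2`.
A vanishing combination `∑ ε_j t_j = 0` with `ε_i ≠ 0` gives `α_i^{±1} = ∏_{j ≠ i} α_j^{∓ε_j}`,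
so `√d_i` lies in the field `ℚ(√d_j : j ≠ i)`. This is impossible: by induction on the set of
adjoined roots, `√N ∉ ℚ(√d_j : j ∈ s)` for every squarefree `N ≠ 1` coprime to all `d_j`, since
writing `√N = u + v √d_a` and squaring forces `u = 0` or `v = 0`, and `u = 0` puts `√(N d_a)`
into the smaller field.
-/

/-- Hypothesis 1: the only vanishing `{-1,0,1}`-combination of `b_2, …, b_n` is
the trivial one. -/
def Hyp1 (n : ℕ) (b : ℕ → ℝ) : Prop :=
  ∀ ε : ℕ → ℝ, (∀ j, ε j = -1 ∨ ε j = 0 ∨ ε j = 1) →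
    (∑ j ∈ Finset.Icc 2 n, ε j * b j) = 0 → ∀ j ∈ Finset.Icc 2 n, ε j = 0

open Function Real

namespace IntermediateField

theorem exists_add_mul_eq_of_mem_adjoin_insert {K L : Type*} [Field K] [Field L] [Algebra K L]
    {S : Set L} {r x : L} (hS : ∀ y ∈ S, IsAlgebraic K y) (hr : IsAlgebraic K r)
    (hr2 : r ^ 2 ∈ adjoin K S) (hx : x ∈ adjoin K (insert r S)) :
    ∃ u ∈ adjoin K S, ∃ v ∈ adjoin K S, x = u + v * r := by
  have hS' : ∀ y ∈ insert r S, IsAlgebraic K y := Set.forall_mem_insert.2 ⟨hr, hS⟩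
  rw [← mem_toSubalgebra, adjoin_toSubalgebra_of_isAlgebraic hS'] at hx
  induction hx using Algebra.adjoin_induction with
  | mem y hy =>
    rcases hy with rfl | hy
    · exact ⟨0, zero_mem _, 1, one_mem _, by ring⟩
    · exact ⟨y, subset_adjoin K S hy, 0, zero_mem _, by ring⟩
  | algebraMap c => exact ⟨algebraMap K L c, algebraMap_mem _ c, 0, zero_mem _, by ring⟩
  | add y z _ _ hy hz =>
    obtain ⟨u, hu, v, hv, rfl⟩ := hy
    obtain ⟨u', hu', v', hv', rfl⟩ := hz
    exact ⟨u + u', add_mem hu hu', v + v', add_mem hv hv', by ring⟩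
  | mul y z _ _ hy hz =>
    obtain ⟨u, hu, v, hv, rfl⟩ := hy
    obtain ⟨u', hu', v', hv', rfl⟩ := hz
    exact ⟨u * u' + v * v' * r ^ 2, add_mem (mul_mem hu hu') (mul_mem (mul_mem hv hv') hr2),
      u * v' + v * u', add_mem (mul_mem hu hv') (mul_mem hv hu'), by ring⟩

end IntermediateField

theorem isAlgebraic_sqrt_natCast (n : ℕ) : IsAlgebraic ℚ (√n : ℝ) :=
  IsAlgebraic.of_pow two_pos (by rw [sq_sqrt n.cast_nonneg]; exact isAlgebraic_natCast n)

theorem irrational_sqrt_of_squarefree {n : ℕ} (hn : Squarefree n) (hn1 : n ≠ 1) :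
    Irrational √n := by
  rw [irrational_sqrt_natCast_iff]
  rintro ⟨r, rfl⟩
  exact hn1 (by simpa using Nat.isUnit_iff.1 (hn r dvd_rfl))

noncomputable def sqrtField {ι : Type*} (s : Finset ι) (d : ι → ℕ) : IntermediateField ℚ ℝ :=
  IntermediateField.adjoin ℚ ((fun j => √(d j : ℝ)) '' s)

theorem sqrt_mem_sqrtField {ι : Type*} {s : Finset ι} (d : ι → ℕ) {j : ι} (hj : j ∈ s) :
    √(d j : ℝ) ∈ sqrtField s d :=
  IntermediateField.subset_adjoin _ _ ⟨j, hj, rfl⟩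

theorem exists_add_mul_sqrt_eq_of_mem_sqrtField_insert {ι : Type*} [DecidableEq ι]
    {s : Finset ι} {d : ι → ℕ} {a : ι} {x : ℝ} (hx : x ∈ sqrtField (insert a s) d) :
    ∃ u ∈ sqrtField s d, ∃ v ∈ sqrtField s d, x = u + v * √(d a : ℝ) := by
  refine IntermediateField.exists_add_mul_eq_of_mem_adjoin_insert ?_
    (isAlgebraic_sqrt_natCast _) ?_ ?_
  · rintro _ ⟨j, -, rfl⟩
    exact isAlgebraic_sqrt_natCast _
  · rw [sq_sqrt (Nat.cast_nonneg _)]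
    exact natCast_mem _ _
  · simpa [sqrtField, Finset.coe_insert, Set.image_insert_eq] using hx

theorem sqrt_not_mem_sqrtField {ι : Type*} [DecidableEq ι] {d : ι → ℕ} (s : Finset ι)
    (hsq : ∀ j ∈ s, Squarefree (d j)) (hcop : (s : Set ι).Pairwise (Nat.Coprime on d))
    (N : ℕ) (hN : Squarefree N) (hN1 : N ≠ 1) (hNcop : ∀ j ∈ s, N.Coprime (d j)) :
    √(N : ℝ) ∉ sqrtField s d := by
  induction s using Finset.induction_on generalizing N with
  | empty =>
    rw [sqrtField, Finset.coe_empty, Set.image_empty, IntermediateField.adjoin_empty,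
      IntermediateField.mem_bot]
    exact irrational_sqrt_of_squarefree hN hN1
  | insert a s ha ih =>
    rw [Finset.coe_insert, Set.pairwise_insert] at hcop
    replace ih := ih (fun j hj => hsq j (Finset.mem_insert_of_mem hj)) hcop.1
    set F := sqrtField s d
    intro h
    obtain ⟨u, hu, v, hv, huv⟩ := exists_add_mul_sqrt_eq_of_mem_sqrtField_insert h
    have hNF : √(N : ℝ) ∉ F := ih N hN hN1 fun j hj => hNcop j (Finset.mem_insert_of_mem hj)
    by_cases hr : √(d a : ℝ) ∈ F
    · exact hNF (huv ▸ add_mem hu (mul_mem hv hr))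
    have hN' := sq_sqrt (Nat.cast_nonneg N : (0 : ℝ) ≤ N)
    have hr' := sq_sqrt (Nat.cast_nonneg (d a) : (0 : ℝ) ≤ d a)
    -- squaring `√N = u + v √d_a` puts `2 u v √d_a` in `F`, which forces `u = 0` or `v = 0`
    have h2uv : 2 * u * v * √(d a : ℝ) ∈ F := by
      have : 2 * u * v * √(d a : ℝ) = N - u ^ 2 - v ^ 2 * d a := by
        rw [huv] at hN'
        linear_combination hN' - v ^ 2 * hr'
      rw [this]
      exact sub_mem (sub_mem (natCast_mem _ _) (pow_mem hu 2))
        (mul_mem (pow_mem hv 2) (natCast_mem _ _))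
    have huv0 : u = 0 ∨ v = 0 := by
      by_contra! hne
      refine hr ?_
      have : √(d a : ℝ) = 2 * u * v * √(d a : ℝ) / (2 * u * v) := by
        field_simp [hne.1, hne.2]
      rw [this]
      exact div_mem h2uv (mul_mem (mul_mem (ofNat_mem _ 2) hu) hv)
    rcases huv0 with rfl | rfl
    · have hNa : √((N * d a : ℕ) : ℝ) = v * d a := by
        rw [Nat.cast_mul, sqrt_mul (Nat.cast_nonneg _), huv, zero_add, mul_assoc, ← sq, hr']
      have hNcop_a : N.Coprime (d a) := hNcop a (Finset.mem_insert_self a s)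
      refine ih (N * d a) ((Nat.squarefree_mul hNcop_a).2 ⟨hN, hsq a (Finset.mem_insert_self a s)⟩)
        (fun h1 => hN1 (Nat.eq_one_of_mul_eq_one_right h1))
        (fun j hj => Nat.Coprime.mul_left (hNcop j (Finset.mem_insert_of_mem hj))
          (hcop.2 j hj (ne_of_mem_of_not_mem hj ha).symm).1) ?_
      rw [hNa]
      exact mul_mem hv (natCast_mem _ _)
    · exact hNF (by rw [huv, zero_mul, add_zero]; exact hu)

theorem half_add_mul_sqrt_mem_iff {K : IntermediateField ℚ ℝ} {m k d : ℕ} (hk : k ≠ 0) :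
    ((m : ℝ) + k * √(d : ℝ)) / 2 ∈ K ↔ √(d : ℝ) ∈ K := by
  constructor
  · intro h
    have hk' : (k : ℝ) ≠ 0 := Nat.cast_ne_zero.2 hk
    have : √(d : ℝ) = (2 * (((m : ℝ) + k * √(d : ℝ)) / 2) - m) / k := by field_simp; ring
    rw [this]
    exact div_mem (sub_mem (mul_mem (ofNat_mem K 2) h) (natCast_mem K m)) (natCast_mem K k)
  · intro h
    exact div_mem (add_mem (natCast_mem K m) (mul_mem (natCast_mem K k) h)) (ofNat_mem K 2)

theorem exp_mul_log_mem_iff {S : Type*} [SetLike S ℝ] [OneMemClass S ℝ] [InvMemClass S ℝ]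
    {K : S} {x ε : ℝ} (hx : 0 < x) (hε : ε = -1 ∨ ε = 0 ∨ ε = 1) :
    exp (ε * log x) ∈ K ↔ ε = 0 ∨ x ∈ K := by
  rcases hε with rfl | rfl | rfl <;> simp [exp_neg, exp_log hx]

theorem sqrt_sq_sub_four_of_pell {m d k : ℕ} (h : m ^ 2 = d * k ^ 2 + 4) :
    √((m : ℝ) ^ 2 - 4) = k * √(d : ℝ) := by
  have h' : (m : ℝ) ^ 2 - 4 = d * k ^ 2 := by
    rw [sub_eq_iff_eq_add]
    exact_mod_cast h
  rw [h', sqrt_mul (Nat.cast_nonneg _), sqrt_sq (Nat.cast_nonneg _), mul_comm]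

theorem pell_logs_satisfy_hyp1_general (n : ℕ) (d m k : ℕ → ℕ)
    (hcop : ∀ i ∈ Finset.Icc 2 n, ∀ j ∈ Finset.Icc 2 n, i ≠ j → Nat.Coprime (d i) (d j))
    (hsq : ∀ j ∈ Finset.Icc 2 n, Squarefree (d j))
    (hd : ∀ j ∈ Finset.Icc 2 n, 2 ≤ d j)
    (hk : ∀ j ∈ Finset.Icc 2 n, 1 ≤ k j)
    (hpell : ∀ j ∈ Finset.Icc 2 n, (m j) ^ 2 = d j * (k j) ^ 2 + 4) :
    Hyp1 n (fun j => Real.log (((m j : ℝ) + Real.sqrt ((m j : ℝ) ^ 2 - 4)) / 2)) := by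
  intro ε hε hsum i hi
  set S := Finset.Icc 2 n
  set α : ℕ → ℝ := fun j => ((m j : ℝ) + k j * √(d j : ℝ)) / 2
  have hk0 : ∀ j ∈ S, k j ≠ 0 := fun j hj => Nat.one_le_iff_ne_zero.1 (hk j hj)
  have hα_pos : ∀ j ∈ S, 0 < α j := fun j hj => by
    have := hk j hj; have := hd j hj; positivity
  have hsum' : ∑ j ∈ S, ε j * log (α j) = 0 := by
    rw [← hsum]
    exact Finset.sum_congr rfl fun j hj => by
      dsimp only; rw [sqrt_sq_sub_four_of_pell (hpell j hj)]
  have hprod : exp (ε i * log (α i)) * ∏ j ∈ S.erase i, exp (ε j * log (α j)) = 1 := by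
    rw [Finset.mul_prod_erase S (fun j => exp (ε j * log (α j))) hi, ← exp_sum, hsum', exp_zero]
  set K := sqrtField (S.erase i) d
  have hi_mem : exp (ε i * log (α i)) ∈ K := by
    rw [eq_inv_of_mul_eq_one_left hprod]
    refine inv_mem (prod_mem fun j hj => ?_)
    have hjS := Finset.mem_of_mem_erase hj
    exact (exp_mul_log_mem_iff (hα_pos j hjS) (hε j)).2 <|
      Or.inr ((half_add_mul_sqrt_mem_iff (hk0 j hjS)).2 (sqrt_mem_sqrtField d hj))
  refine ((exp_mul_log_mem_iff (hα_pos i hi) (hε i)).1 hi_mem).resolve_right fun hαi => ?_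
  refine sqrt_not_mem_sqrtField (S.erase i) (fun j hj => hsq j (Finset.mem_of_mem_erase hj))
    (fun a ha b hb hab => hcop a (Finset.mem_of_mem_erase ha) b (Finset.mem_of_mem_erase hb) hab)
    (d i) (hsq i hi) (by have := hd i hi; omega)
    (fun j hj => hcop i hi j (Finset.mem_of_mem_erase hj) (Finset.ne_of_mem_erase hj).symm)
    ((half_add_mul_sqrt_mem_iff (hk0 i hi)).1 hαi)

/-- With `d_j` pairwise coprime square-free naturals `≥ 2` and `(m_j, k_j)`
nontrivial solutions of `m² - d k² = 4`, the numbers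
`t_j = log((m_j + √(m_j²-4))/2)` satisfy Hypothesis 1. -/
theorem pell_logs_satisfy_hyp1 (n : ℕ) (d m k : ℕ → ℕ)
    (hcop : ∀ i ∈ Finset.Icc 2 n, ∀ j ∈ Finset.Icc 2 n, i ≠ j → Nat.Coprime (d i) (d j))
    (hsq : ∀ j ∈ Finset.Icc 2 n, Squarefree (d j))
    (hd : ∀ j ∈ Finset.Icc 2 n, 2 ≤ d j)
    (hm : ∀ j ∈ Finset.Icc 2 n, 3 ≤ m j)
    (hk : ∀ j ∈ Finset.Icc 2 n, 1 ≤ k j)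
    (hpell : ∀ j ∈ Finset.Icc 2 n, (m j) ^ 2 = d j * (k j) ^ 2 + 4) :
    Hyp1 n (fun j => Real.log (((m j : ℝ) + Real.sqrt ((m j : ℝ) ^ 2 - 4)) / 2)) :=
  pell_logs_satisfy_hyp1_general n d m k hcop hsq hd hk hpell
end

section
/- Let d_2, ..., d_n be pairwise distinct, pairwise coprime square-free integers, each at least 2. Then the real numbers 1 and √(∏_{j∈S} d_j) for all nonempty subsets S of {2,...,n} (in particular √(d_2), ..., √(d_n) and all products √(d_i d_j), i < j) are linearly independent over ℚ. -/
open Finset Real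

namespace SqrtProdAux

/-- the square root of the product of `d j` over `j ∈ S`. -/
noncomputable def pr (d : ℕ → ℕ) (S : Finset ℕ) : ℝ := Real.sqrt (∏ j ∈ S, (d j : ℝ))

/-- the `ℚ`-span of the products over subsets of `I`. -/
noncomputable def sp (d : ℕ → ℕ) (I : Finset ℕ) : Submodule ℚ ℝ :=
  Submodule.span ℚ (pr d '' {S : Finset ℕ | S ⊆ I})

variable {d : ℕ → ℕ}

lemma pr_eq_cast (S : Finset ℕ) : pr d S = Real.sqrt ((∏ j ∈ S, d j : ℕ) : ℝ) := by
  simp [pr]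

lemma pr_nonneg (S : Finset ℕ) : 0 ≤ pr d S := Real.sqrt_nonneg _

lemma pr_empty : pr d ∅ = 1 := by simp [pr]

lemma pr_mem_sp {S I : Finset ℕ} (hS : S ⊆ I) : pr d S ∈ sp d I :=
  Submodule.subset_span ⟨S, hS, rfl⟩

lemma one_mem_sp (I : Finset ℕ) : (1 : ℝ) ∈ sp d I := by
  simpa [pr_empty] using pr_mem_sp (d := d) (Finset.empty_subset I)

lemma ratCast_mul_mem_sp {I : Finset ℕ} (q : ℚ) {x : ℝ} (hx : x ∈ sp d I) :
    (q : ℝ) * x ∈ sp d I := by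
  simpa [Rat.smul_def] using (sp d I).smul_mem q hx

lemma natCast_mem_sp (I : Finset ℕ) (k : ℕ) : ((k : ℝ)) ∈ sp d I := by
  simpa using ratCast_mul_mem_sp (k : ℚ) (one_mem_sp I)

/-- key product identity on the naturals -/
lemma prod_mul_prod (S S' : Finset ℕ) :
    (∏ j ∈ S, d j) * ∏ j ∈ S', d j =
      (∏ j ∈ S ∩ S', d j) ^ 2 * ∏ j ∈ (S \ S') ∪ (S' \ S), d j := by
  rw [Finset.prod_union disjoint_sdiff_sdiff,
    ← Finset.prod_inter_mul_prod_diff S S' (d ·), ← Finset.prod_inter_mul_prod_diff S' S (d ·),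
    Finset.inter_comm S' S]
  ring

lemma pr_mul_pr (S S' : Finset ℕ) :
    pr d S * pr d S' = ((∏ j ∈ S ∩ S', d j : ℕ) : ℝ) * pr d ((S \ S') ∪ (S' \ S)) := by
  rw [pr_eq_cast, pr_eq_cast, pr_eq_cast, ← Real.sqrt_mul (by positivity),
    ← Nat.cast_mul, prod_mul_prod]
  push_cast
  rw [Real.sqrt_mul (by positivity), Real.sqrt_sq (by positivity)]

lemma mul_mem_sp {I : Finset ℕ} {x y : ℝ} (hx : x ∈ sp d I) (hy : y ∈ sp d I) :
    x * y ∈ sp d I := by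
  have h : sp d I * sp d I ≤ sp d I := by
    rw [sp, Submodule.span_mul_span]
    apply Submodule.span_le.2
    rintro z ⟨z1, ⟨S, hS, rfl⟩, z2, ⟨S', hS', rfl⟩, rfl⟩
    show pr d S * pr d S' ∈ _
    rw [pr_mul_pr]
    have h2 : ((∏ j ∈ S ∩ S', d j : ℕ) : ℚ) • pr d ((S \ S') ∪ (S' \ S)) ∈ sp d I :=
      (sp d I).smul_mem _ (pr_mem_sp (Finset.union_subset
        ((Finset.sdiff_subset).trans hS) ((Finset.sdiff_subset).trans hS')))
    show _ ∈ sp d I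
    simpa [Rat.smul_def] using h2
  exact h (Submodule.mul_mem_mul hx hy)


lemma sqrt_isAlgebraic (k : ℕ) : IsAlgebraic ℚ (Real.sqrt k) := by
  have h : IsIntegral ℚ (Real.sqrt k) := by
    refine ⟨Polynomial.X ^ 2 - Polynomial.C (k : ℚ), Polynomial.monic_X_pow_sub_C _ two_ne_zero, ?_⟩
    simp [Polynomial.eval₂_sub, Real.sq_sqrt (by positivity : (0:ℝ) ≤ ((k:ℕ) : ℝ))]
  exact h.isAlgebraic

lemma pr_eq_prod_sqrt (S : Finset ℕ) : pr d S = ∏ j ∈ S, Real.sqrt (d j : ℝ) := by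
  induction S using Finset.cons_induction with
  | empty => simp [pr_empty]
  | cons a S ha ih =>
    rw [Finset.prod_cons, ← ih, pr, pr, Finset.prod_cons,
      Real.sqrt_mul (by positivity)]

lemma inv_mem_sp {I : Finset ℕ} {x : ℝ} (hx : x ∈ sp d I) : x⁻¹ ∈ sp d I := by
  set s : Set ℝ := (fun j => Real.sqrt (d j : ℝ)) '' (I : Set ℕ) with hs
  set A : Subalgebra ℚ ℝ :=
    (sp d I).toSubalgebra (one_mem_sp I) (fun x y hx hy => mul_mem_sp hx hy) with hAdef
  have hA : A = Algebra.adjoin ℚ s := by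
    apply le_antisymm
    · intro z hz
      have hle : sp d I ≤ Subalgebra.toSubmodule (Algebra.adjoin ℚ s) := by
        apply Submodule.span_le.2
        rintro w ⟨S, hS, rfl⟩
        rw [SetLike.mem_coe, Subalgebra.mem_toSubmodule, pr_eq_prod_sqrt]
        exact Subalgebra.prod_mem _ (fun j hj => Algebra.subset_adjoin ⟨j, hS hj, rfl⟩)
      exact hle hz
    · apply Algebra.adjoin_le
      rintro z ⟨j, hj, rfl⟩
      show Real.sqrt (d j : ℝ) ∈ sp d I
      have := pr_mem_sp (d := d) (Finset.singleton_subset_iff.2 hj)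
      simpa [pr] using this
  have halg : ∀ z ∈ s, IsAlgebraic ℚ z := by
    rintro z ⟨j, hj, rfl⟩; exact sqrt_isAlgebraic _
  have hF : (IntermediateField.adjoin ℚ s).toSubalgebra = Algebra.adjoin ℚ s :=
    IntermediateField.adjoin_toSubalgebra_of_isAlgebraic halg
  have hxF : x ∈ IntermediateField.adjoin ℚ s := by
    rw [← IntermediateField.mem_toSubalgebra, hF, ← hA]
    exact hx
  have hinv : x⁻¹ ∈ IntermediateField.adjoin ℚ s := inv_mem hxF
  rw [← IntermediateField.mem_toSubalgebra, hF, ← hA] at hinv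
  exact hinv


lemma decomp {I : Finset ℕ} {t : ℕ} (ht : t ∉ I) {x : ℝ} (hx : x ∈ sp d (insert t I)) :
    ∃ a ∈ sp d I, ∃ b ∈ sp d I, x = a + b * Real.sqrt (d t : ℝ) := by
  set U : Submodule ℚ ℝ :=
    { carrier := {x | ∃ a ∈ sp d I, ∃ b ∈ sp d I, x = a + b * Real.sqrt (d t : ℝ)}
      add_mem' := by
        rintro u v ⟨a, ha, b, hb, rfl⟩ ⟨a', ha', b', hb', rfl⟩
        exact ⟨a + a', add_mem ha ha', b + b', add_mem hb hb', by ring⟩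
      zero_mem' := ⟨0, zero_mem _, 0, zero_mem _, by ring⟩
      smul_mem' := by
        rintro q u ⟨a, ha, b, hb, rfl⟩
        exact ⟨q • a, Submodule.smul_mem _ q ha, q • b, Submodule.smul_mem _ q hb, by
          simp [Rat.smul_def]; ring⟩ } with hU
  have hle : sp d (insert t I) ≤ U := by
    apply Submodule.span_le.2
    rintro w ⟨S, hS, rfl⟩
    simp only [Set.mem_setOf_eq] at hS
    by_cases htS : t ∈ S
    · refine ⟨0, zero_mem _, pr d (S.erase t), pr_mem_sp ?_, ?_⟩
      · intro j hj
        have := hS (Finset.mem_of_mem_erase hj)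
        rcases Finset.mem_insert.1 this with h | h
        · exact absurd h (Finset.ne_of_mem_erase hj)
        · exact h
      · rw [pr, pr, ← Finset.mul_prod_erase _ _ htS,
          Real.sqrt_mul (by positivity)]
        ring
    · refine ⟨pr d S, pr_mem_sp ?_, 0, zero_mem _, by ring⟩
      intro j hj
      rcases Finset.mem_insert.1 (hS hj) with h | h
      · exact absurd (h ▸ hj) htS
      · exact h
  exact hle hx

lemma not_isSquare_of_squarefree {m : ℕ} (hm : 2 ≤ m) (hsq : Squarefree m) : ¬ IsSquare m := by
  rintro ⟨r, hr⟩
  have : IsUnit r := hsq r (by rw [hr])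
  rw [Nat.isUnit_iff] at this
  subst this
  omega

/-- The key lemma: a square root of a squarefree number coprime to everything in sight
is not in the span. -/
lemma key : ∀ (I : Finset ℕ), (∀ j ∈ I, 2 ≤ d j) → (∀ j ∈ I, Squarefree (d j)) →
    (∀ i ∈ I, ∀ j ∈ I, i ≠ j → Nat.Coprime (d i) (d j)) →
    ∀ m : ℕ, 2 ≤ m → Squarefree m → (∀ j ∈ I, Nat.Coprime m (d j)) →
    Real.sqrt (m : ℝ) ∉ sp d I := by
  intro I
  induction I using Finset.induction_on with
  | empty =>
    intro _ _ _ m hm2 hmsq _ hmem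
    have h1 : sp d (∅ : Finset ℕ) ≤ Submodule.span ℚ {(1 : ℝ)} := by
      apply Submodule.span_le.2
      rintro w ⟨S, hS, rfl⟩
      simp only [Set.mem_setOf_eq, Finset.subset_empty] at hS
      simp only [hS, pr_empty]
      exact Submodule.mem_span_singleton_self 1
    obtain ⟨q, hq⟩ := Submodule.mem_span_singleton.1 (h1 hmem)
    have : Irrational (Real.sqrt (m : ℝ)) :=
      irrational_sqrt_natCast_iff.2 (not_isSquare_of_squarefree hm2 hmsq)
    exact this ⟨q, by simpa [Rat.smul_def] using hq⟩
  | @insert t I ht ih =>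
    intro H2 Hsq Hcop m hm2 hmsq hmcop hmem
    have hmemt : t ∈ insert t I := Finset.mem_insert_self t I
    have hmemI : ∀ j ∈ I, j ∈ insert t I := fun j hj => Finset.mem_insert_of_mem hj
    have ihI := ih (fun j hj => H2 j (hmemI j hj)) (fun j hj => Hsq j (hmemI j hj))
      (fun i hi j hj hij => Hcop i (hmemI i hi) j (hmemI j hj) hij)
    have htcop : ∀ j ∈ I, Nat.Coprime (d t) (d j) := fun j hj =>
      Hcop t hmemt j (hmemI j hj) (fun h => ht (h ▸ hj))
    have hta : Real.sqrt (d t : ℝ) ∉ sp d I :=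
      ihI (d t) (H2 t hmemt) (Hsq t hmemt) htcop
    have hmI : Real.sqrt (m : ℝ) ∉ sp d I :=
      ihI m hm2 hmsq (fun j hj => hmcop j (hmemI j hj))
    obtain ⟨a, ha, b, hb, hab⟩ := decomp ht hmem
    have htnn : (0:ℝ) ≤ (d t : ℝ) := by positivity
    have hmnn : (0:ℝ) ≤ (m : ℝ) := by positivity
    by_cases hb0 : b = 0
    · exact hmI (by rw [hab, hb0]; simpa using ha)
    by_cases ha0 : a = 0
    · -- √m = b √t, so √(m * d t) = b * d t ∈ sp d I
      have h1 : Real.sqrt ((m * d t : ℕ) : ℝ) = (d t : ℝ) * b := by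
        push_cast
        rw [Real.sqrt_mul hmnn, hab, ha0, zero_add, mul_assoc,
          Real.mul_self_sqrt htnn]
        ring
      have h2 : Real.sqrt ((m * d t : ℕ) : ℝ) ∈ sp d I := by
        rw [h1]
        have := (sp d I).smul_mem ((d t : ℕ) : ℚ) hb
        simpa [Rat.smul_def] using this
      refine ihI (m * d t) ?_ ?_ ?_ h2
      · calc 2 ≤ m := hm2
          _ ≤ m * d t := Nat.le_mul_of_pos_right m (by have := H2 t hmemt; omega)
      · exact (Nat.squarefree_mul (hmcop t hmemt)).2 ⟨hmsq, Hsq t hmemt⟩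
      · exact fun j hj => Nat.Coprime.mul (hmcop j (hmemI j hj)) (htcop j hj)
    · -- both nonzero: solve for √t
      have hsq_eq : (m : ℝ) = a^2 + b^2 * (d t : ℝ) + 2*a*b * Real.sqrt (d t : ℝ) := by
        have h1 : (m : ℝ) = Real.sqrt (m : ℝ) ^ 2 := (Real.sq_sqrt hmnn).symm
        rw [h1, hab]
        have h2 : Real.sqrt (d t : ℝ) ^ 2 = (d t : ℝ) := Real.sq_sqrt htnn
        ring_nf
        nlinarith [h2]
      have hab0 : (2*a*b : ℝ) ≠ 0 := by
        simp only [mul_ne_zero_iff]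
        exact ⟨⟨two_ne_zero, ha0⟩, hb0⟩
      have hsol : Real.sqrt (d t : ℝ) = ((m : ℝ) - a^2 - b^2 * (d t : ℝ)) * (2*a*b)⁻¹ := by
        field_simp
        linarith [hsq_eq]
      apply hta
      rw [hsol]
      have hm' : ((m:ℝ)) ∈ sp d I := natCast_mem_sp I m
      have ha2 : (a^2 : ℝ) ∈ sp d I := by rw [sq]; exact mul_mem_sp ha ha
      have hb2t : (b^2 * (d t : ℝ) : ℝ) ∈ sp d I := by
        rw [sq]
        exact mul_mem_sp (mul_mem_sp hb hb) (natCast_mem_sp I (d t))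
      exact mul_mem_sp (sub_mem (sub_mem hm' ha2) hb2t)
        (inv_mem_sp (mul_mem_sp (mul_mem_sp (natCast_mem_sp I 2) ha) hb))


lemma lin : ∀ (I : Finset ℕ), (∀ j ∈ I, 2 ≤ d j) → (∀ j ∈ I, Squarefree (d j)) →
    (∀ i ∈ I, ∀ j ∈ I, i ≠ j → Nat.Coprime (d i) (d j)) →
    ∀ g : Finset ℕ → ℚ, (∑ S ∈ I.powerset, (g S : ℝ) * pr d S) = 0 →
    ∀ S ∈ I.powerset, g S = 0 := by
  intro I
  induction I using Finset.induction_on with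
  | empty =>
    intro _ _ _ g hsum S hS
    rw [Finset.powerset_empty, Finset.sum_singleton, pr_empty, mul_one] at hsum
    rw [Finset.powerset_empty, Finset.mem_singleton] at hS
    subst hS
    exact_mod_cast hsum
  | @insert t I ht ih =>
    intro H2 Hsq Hcop g hsum
    have hmemt : t ∈ insert t I := Finset.mem_insert_self t I
    have hmemI : ∀ j ∈ I, j ∈ insert t I := fun j hj => Finset.mem_insert_of_mem hj
    have ihI := ih (fun j hj => H2 j (hmemI j hj)) (fun j hj => Hsq j (hmemI j hj))
      (fun i hi j hj hij => Hcop i (hmemI i hi) j (hmemI j hj) hij)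
    rw [Finset.sum_powerset_insert ht] at hsum
    have hprs : ∀ S ∈ I.powerset, pr d (insert t S) = pr d S * Real.sqrt (d t : ℝ) := by
      intro S hS
      rw [pr, pr, Finset.prod_insert (fun h => ht (Finset.mem_powerset.1 hS h)),
        Real.sqrt_mul (by positivity)]
      ring
    set x : ℝ := ∑ S ∈ I.powerset, (g S : ℝ) * pr d S with hxdef
    set y : ℝ := ∑ S ∈ I.powerset, (g (insert t S) : ℝ) * pr d S with hydef
    have hsum2 : x + y * Real.sqrt (d t : ℝ) = 0 := by
      rw [← hsum, hxdef, hydef, Finset.sum_mul]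
      congr 1
      apply Finset.sum_congr rfl
      intro S hS
      rw [hprs S hS]
      ring
    have hx : x ∈ sp d I := by
      apply Submodule.sum_mem
      intro S hS
      have := (sp d I).smul_mem (g S) (pr_mem_sp (Finset.mem_powerset.1 hS))
      simpa [Rat.smul_def] using this
    have hy : y ∈ sp d I := by
      apply Submodule.sum_mem
      intro S hS
      have := (sp d I).smul_mem (g (insert t S)) (pr_mem_sp (Finset.mem_powerset.1 hS))
      simpa [Rat.smul_def] using this
    have hy0 : y = 0 := by
      by_contra hy0
      have hsol : Real.sqrt (d t : ℝ) = -x * y⁻¹ := by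
        field_simp
        linarith [hsum2]
      have htI : Real.sqrt (d t : ℝ) ∉ sp d I :=
        key I (fun j hj => H2 j (hmemI j hj)) (fun j hj => Hsq j (hmemI j hj))
          (fun i hi j hj hij => Hcop i (hmemI i hi) j (hmemI j hj) hij)
          (d t) (H2 t hmemt) (Hsq t hmemt)
          (fun j hj => Hcop t hmemt j (hmemI j hj) (fun h => ht (h ▸ hj)))
      exact htI (hsol ▸ mul_mem_sp (neg_mem hx) (inv_mem_sp hy))
    have hx0 : x = 0 := by
      rw [hy0] at hsum2
      simpa using hsum2
    intro S hS
    rw [Finset.mem_powerset] at hS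
    by_cases htS : t ∈ S
    · have hSe : S.erase t ∈ I.powerset := by
        rw [Finset.mem_powerset]
        intro j hj
        rcases Finset.mem_insert.1 (hS (Finset.mem_of_mem_erase hj)) with h | h
        · exact absurd h (Finset.ne_of_mem_erase hj)
        · exact h
      have hy0' : (∑ S ∈ I.powerset, ((g (insert t S) : ℚ) : ℝ) * pr d S) = 0 := by
        rw [← hydef]; exact hy0
      have h3 := ihI (fun S' => g (insert t S')) hy0' (S.erase t) hSe
      rw [Finset.insert_erase htS] at h3
      exact h3
    · have hSI : S ∈ I.powerset := by
        rw [Finset.mem_powerset]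
        intro j hj
        exact (Finset.mem_insert.1 (hS hj)).resolve_left (fun h => htS (h ▸ hj))
      exact ihI g hx0 S hSI

end SqrtProdAux

/-- For pairwise coprime square-free naturals `d_2, …, d_n ≥ 2`, the family of
real numbers `√(∏_{j ∈ S} d_j)`, indexed by the subsets `S` of `{2, …, n}`
(with `S = ∅` giving `1`), is linearly independent over `ℚ`. -/
theorem sqrt_products_linearIndependent (n : ℕ) (d : ℕ → ℕ)
    (hd : ∀ j ∈ Finset.Icc 2 n, 2 ≤ d j)
    (hsq : ∀ j ∈ Finset.Icc 2 n, Squarefree (d j))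
    (hcop : ∀ i ∈ Finset.Icc 2 n, ∀ j ∈ Finset.Icc 2 n, i ≠ j → Nat.Coprime (d i) (d j)) :
    LinearIndependent ℚ
      (fun S : ((Finset.Icc 2 n).powerset : Finset (Finset ℕ)) =>
        Real.sqrt (∏ j ∈ (S : Finset ℕ), (d j : ℝ))) := by
  classical
  rw [Fintype.linearIndependent_iff]
  intro g hsum i
  set G : Finset ℕ → ℚ :=
    fun S => if h : S ∈ (Finset.Icc 2 n).powerset then g ⟨S, h⟩ else 0 with hG
  have hsum' : ∑ S ∈ (Finset.Icc 2 n).powerset, (G S : ℝ) * SqrtProdAux.pr d S = 0 := by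
    rw [← hsum]
    rw [← Finset.sum_attach (Finset.Icc 2 n).powerset (fun S => (G S : ℝ) * SqrtProdAux.pr d S),
      ← Finset.univ_eq_attach]
    apply Finset.sum_congr rfl
    intro x _
    rw [hG]
    simp only [dif_pos x.2]
    rw [Rat.smul_def, SqrtProdAux.pr]
  have := SqrtProdAux.lin (Finset.Icc 2 n) hd hsq hcop G hsum' i.1 i.2
  rw [hG] at this
  simpa [dif_pos i.2] using this
end

section
/- Let g be the Lie algebra with basis e_1,...,e_{2n} and Chevalley–Eilenberg differential determined by d e^1 = d e^{2n} = 0, d e^i = b_i e^i ∧ e^{2n} and d e^{i+n-1} = -b_i e^{i+n-1} ∧ e^{2n} for 2 ≤ i ≤ n. Then the 2-form ω = e^1 ∧ e^{2n} + Σ_{i=2}^n e^i ∧ e^{i+n-1} is closed, and ω^n = n! · e^1 ∧ e^2 ∧ e^{n+1} ∧ e^3 ∧ e^{n+2} ∧ ... ≠ 0, so ω is a symplectic form on g. -/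
/-!
Each summand of `ω` is a product of two 1-forms, so the summands commute pairwise and square to
zero; the binomial theorem with a square-zero term then gives `ω ^ n = n! • (product of the
summands)`. That product is a wedge of `2n` distinct basis covectors, which is nonzero because
its factors are linearly independent. For closedness, `d` kills `δ` by the Leibniz rule, and on
`γ_i` the weights `b_i` and `-b_i` of the two factors cancel.
-/

open ExteriorAlgebra

section SquareZero

variable {A : Type*} [Semiring A]

theorem Commute.add_pow_succ_of_mul_self_eq_zero {x y : A} (h : Commute x y) (hx : x * x = 0)
    (m : ℕ) : (x + y) ^ (m + 1) = y ^ (m + 1) + (m + 1) • (x * y ^ m) := by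
  have hx_pow : ∀ k, x ^ (k + 2) = 0 := fun k => by rw [pow_add, sq, hx, mul_zero]
  rw [h.add_pow, Finset.sum_range_succ', Finset.sum_range_succ', Finset.sum_eq_zero
    fun k _ => by rw [hx_pow, zero_mul, zero_mul], nsmul_eq_mul']
  simp [add_comm]

theorem List.sum_pow_length_add_one_eq_zero {l : List A} (hc : l.Pairwise Commute)
    (hsq : ∀ a ∈ l, a * a = 0) : l.sum ^ (l.length + 1) = 0 := by
  induction l with
  | nil => simp
  | cons x t ih =>
    rw [List.pairwise_cons] at hc
    rw [List.forall_mem_cons] at hsq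
    have hxt : Commute x t.sum := Commute.list_sum_right _ _ hc.1
    rw [List.sum_cons, List.length_cons, hxt.add_pow_succ_of_mul_self_eq_zero hsq.1, pow_succ,
      ih hc.2 hsq.2, zero_mul, mul_zero, smul_zero, add_zero]

theorem List.sum_pow_length_eq_factorial_smul_prod {l : List A} (hc : l.Pairwise Commute)
    (hsq : ∀ a ∈ l, a * a = 0) : l.sum ^ l.length = l.length.factorial • l.prod := by
  induction l with
  | nil => simp
  | cons x t ih =>
    rw [List.pairwise_cons] at hc
    rw [List.forall_mem_cons] at hsq
    have hxt : Commute x t.sum := Commute.list_sum_right _ _ hc.1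
    rw [List.sum_cons, List.length_cons, hxt.add_pow_succ_of_mul_self_eq_zero hsq.1,
      List.sum_pow_length_add_one_eq_zero hc.2 hsq.2, ih hc.2 hsq.2, zero_add,
      mul_smul_comm, smul_smul, List.prod_cons, Nat.factorial_succ]

end SquareZero

namespace ExteriorAlgebra

section CommRing

variable {R M : Type*} [CommRing R] [AddCommGroup M] [Module R M]

theorem ι_mul_ι_commute_ι (x y z : M) : Commute (ι R x * ι R y) (ι R z) := by
  have anti : ∀ a b : M, ι R a * ι R b = -(ι R b * ι R a) :=
    fun a b => eq_neg_of_add_eq_zero_left (ι_add_mul_swap a b)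
  show ι R x * ι R y * ι R z = ι R z * (ι R x * ι R y)
  rw [mul_assoc, anti y z, mul_neg, ← mul_assoc, anti x z, neg_mul, neg_neg, mul_assoc]

theorem ι_mul_ι_commute_ι_mul_ι (x y z w : M) : Commute (ι R x * ι R y) (ι R z * ι R w) :=
  (ι_mul_ι_commute_ι x y z).mul_right (ι_mul_ι_commute_ι x y w)

theorem ι_mul_ι_mul_self (x y : M) : ι R x * ι R y * (ι R x * ι R y) = 0 := by
  rw [← mul_assoc, (ι_mul_ι_commute_ι x y x).eq, ← mul_assoc, ι_sq_zero, zero_mul, zero_mul]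

variable (R) in
theorem sum_map_ι_mul_ι_pow_length {α : Type*} (f : α → M) (l : List (α × α)) :
    (l.map fun p => ι R (f p.1) * ι R (f p.2)).sum ^ l.length =
      l.length.factorial • (l.map fun p => ι R (f p.1) * ι R (f p.2)).prod := by
  have h := List.sum_pow_length_eq_factorial_smul_prod
    (l := l.map fun p => ι R (f p.1) * ι R (f p.2))
    (List.pairwise_map.2 (List.pairwise_of_forall fun _ _ => ι_mul_ι_commute_ι_mul_ι ..))
    (List.forall_mem_map.2 fun _ _ => ι_mul_ι_mul_self ..)
  rwa [List.length_map] at h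

theorem map_ι_mul_ι_eq_zero_of_opposite_weights
    (d : ExteriorAlgebra R M →ₗ[R] ExteriorAlgebra R M)
    (hd : ∀ v x, d (ι R v * x) = d (ι R v) * x - ι R v * d x) {x y z : M} (c : R)
    (hx : d (ι R x) = c • (ι R x * ι R z)) (hy : d (ι R y) = -c • (ι R y * ι R z)) :
    d (ι R x * ι R y) = 0 := by
  rw [hd, hx, hy, neg_smul, mul_neg, sub_neg_eq_add, smul_mul_assoc, mul_smul_comm, ← smul_add,
    mul_assoc (ι R x), ← mul_add, ι_add_mul_swap, mul_zero, smul_zero]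

end CommRing

section Field

variable {K E : Type*} [Field K] [AddCommGroup E] [Module K E]

theorem ιMulti_ne_zero_of_linearIndependent {m : ℕ} {v : Fin m → E}
    (hv : LinearIndependent K v) : ιMulti K m v ≠ 0 := by
  -- The only `m`-subset of `Fin m` is `univ`, whose member of the family is `ιMulti v` itself.
  have h := (exteriorPower.ιMulti_family_linearIndependent_field (n := m) hv).ne_zero
    (Set.powersetCard.ofFinEmbEquiv (OrderIso.refl (Fin m)).toOrderEmbedding)
  rw [← exteriorPower.ιMulti_apply_coe, Ne, Submodule.coe_eq_zero]
  simpa [exteriorPower.ιMulti_family] using h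

theorem prod_map_ι_ne_zero_of_linearIndepOn {I : Type*} {v : I → E} {s : Set I}
    (hv : LinearIndepOn K v s) {l : List I} (hl : l.Nodup) (hls : ∀ i ∈ l, i ∈ s) :
    (l.map fun i => ι K (v i)).prod ≠ 0 := by
  have hl_inj : Function.Injective fun k : Fin l.length => (⟨l.get k, hls _ (l.get_mem k)⟩ : s) :=
    fun a b h => List.nodup_iff_injective_get.mp hl (congrArg Subtype.val h)
  have h := ιMulti_ne_zero_of_linearIndependent (v := fun k => v (l.get k)) (hv.comp _ hl_inj)
  rw [ιMulti_apply] at h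
  rwa [← List.ofFn_get l, List.map_ofFn]

end Field

end ExteriorAlgebra

def natSingle (K : Type*) [Zero K] [One K] (m i : ℕ) : Fin m → K :=
  if h : i < m then Pi.single ⟨i, h⟩ 1 else 0

theorem linearIndepOn_natSingle (K : Type*) [Semiring K] (m : ℕ) :
    LinearIndepOn K (natSingle K m) (Set.Iio m) := by
  have h : (fun i : Set.Iio m => natSingle K m i) =
      Pi.basisFun K (Fin m) ∘ fun i : Set.Iio m => (⟨i, i.2⟩ : Fin m) := by
    funext i
    rw [natSingle, dif_pos (show (i : ℕ) < m from i.2)]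
    simp
  show LinearIndependent K fun i : Set.Iio m => natSingle K m i
  rw [h]
  exact (Pi.basisFun K (Fin m)).linearIndependent.comp _ fun a b hab => by
    simpa [Subtype.ext_iff] using congrArg Fin.val hab

theorem ι_natSingle_eq_dite (K : Type*) [CommRing K] (m : ℕ) :
    (fun i => ι K (natSingle K m i)) =
      fun i => if h : i < m then ι K (Pi.single (⟨i, h⟩ : Fin m) (1 : K)) else 0 := by
  funext i
  unfold natSingle
  split_ifs <;> simp

theorem List.prod_map_mul_eq_prod_map_flatMap {α M : Type*} [Monoid M] (f : α → M)
    (l : List (α × α)) :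
    (l.map fun p => f p.1 * f p.2).prod = ((l.flatMap fun p => [p.1, p.2]).map f).prod := by
  induction l with
  | nil => simp
  | cons p l ih => simp [ih, mul_assoc]

-- Zero-based indices of the two factors of `δ, γ_2, …, γ_n`.
def darbouxPairs (n : ℕ) : List (ℕ × ℕ) :=
  (0, 2 * n - 1) :: (List.range (n - 1)).map fun j => (j + 1, j + n)

section DarbouxPairs

variable {n : ℕ}

theorem length_darbouxPairs (hn : 1 ≤ n) : (darbouxPairs n).length = n := by
  simp only [darbouxPairs, List.length_cons, List.length_map, List.length_range]
  omega

theorem sum_map_darbouxPairs {M : Type*} [AddCommMonoid M] (f : ℕ → ℕ → M) :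
    ((darbouxPairs n).map fun p => f p.1 p.2).sum =
      f 0 (2 * n - 1) + ∑ j ∈ Finset.Icc 1 (n - 1), f j (j + n - 1) := by
  have shift := Finset.sum_Ico_add' (fun j => f j (j + n - 1)) 0 (n - 1) 1
  rw [zero_add, Finset.Ico_add_one_right_eq_Icc, ← Finset.range_eq_Ico] at shift
  rw [darbouxPairs, List.map_cons, List.sum_cons, List.map_map,
    ← List.sum_toFinset _ List.nodup_range, List.toFinset_range, ← shift]
  refine congrArg _ (Finset.sum_congr rfl fun j _ => ?_)
  simp only [Function.comp_apply]
  congr 1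
  omega

theorem nodup_flatMap_darbouxPairs (hn : 1 ≤ n) :
    ((darbouxPairs n).flatMap fun p => [p.1, p.2]).Nodup := by
  simp only [darbouxPairs, List.flatMap_cons, List.flatMap_map, List.cons_append, List.nil_append,
    List.nodup_cons, List.mem_cons, List.mem_flatMap, List.mem_range, Nat.right_eq_add,
    Nat.add_eq_zero_iff, one_ne_zero, and_false, List.not_mem_nil, or_false, false_or, not_or,
    not_exists, not_and, Nat.pred_eq_succ_iff, List.nodup_flatMap, Nat.add_left_cancel_iff,
    not_false_eq_true, List.nodup_nil, and_self, and_true]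
  refine ⟨⟨by omega, fun x _ => by omega⟩, fun x _ => by omega, fun x _ => by omega,
    List.pairwise_lt_range.imp_of_mem fun _ hb hab => ?_⟩
  simp only [Function.onFun, List.disjoint_cons_right, List.mem_cons, Nat.add_right_cancel_iff,
    List.not_mem_nil, or_false, not_or, List.disjoint_nil_right, and_true]
  have := List.mem_range.mp hb
  omega

theorem lt_of_mem_flatMap_darbouxPairs (hn : 1 ≤ n) {i : ℕ}
    (hi : i ∈ (darbouxPairs n).flatMap fun p => [p.1, p.2]) : i < 2 * n := by
  simp only [darbouxPairs, List.flatMap_cons, List.cons_append, List.nil_append, List.mem_cons,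
    List.mem_flatMap, List.mem_map, List.mem_range, List.not_mem_nil, or_false,
    exists_exists_and_eq_and] at hi
  omega

end DarbouxPairs

/-- In the Chevalley–Eilenberg complex of the diagonal almost abelian Lie
algebra (zero-based indexing: `u i` is the generator `e^{i+1}` of the exterior
algebra of the dual), the 2-form
`ω = e^1 ∧ e^{2n} + Σ_{i=2}^n e^i ∧ e^{i+n-1}` is closed and
`ω^n = n! · δ ∧ γ_2 ∧ ⋯ ∧ γ_n ≠ 0`, so `ω` is symplectic.

Here `d` is any linear map which is an antiderivation on products with
1-forms and takes the prescribed values on generators. -/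
theorem omega_closed_and_top_power (n : ℕ) (hn : 2 ≤ n) (b : ℕ → ℝ)
    (d : ExteriorAlgebra ℝ (Fin (2 * n) → ℝ) →ₗ[ℝ] ExteriorAlgebra ℝ (Fin (2 * n) → ℝ)) :
    ∀ u : ℕ → ExteriorAlgebra ℝ (Fin (2 * n) → ℝ),
    (u = fun i => if h : i < 2 * n then
        ExteriorAlgebra.ι ℝ (Pi.single (⟨i, h⟩ : Fin (2 * n)) (1 : ℝ)) else 0) →
    (∀ v : Fin (2 * n) → ℝ, ∀ x, d (ExteriorAlgebra.ι ℝ v * x) =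
        d (ExteriorAlgebra.ι ℝ v) * x - ExteriorAlgebra.ι ℝ v * d x) →
    d (u 0) = 0 → d (u (2 * n - 1)) = 0 →
    (∀ i : ℕ, 1 ≤ i → i ≤ n - 1 → d (u i) = b (i + 1) • (u i * u (2 * n - 1))) →
    (∀ i : ℕ, n ≤ i → i ≤ 2 * n - 2 → d (u i) = -(b (i - n + 2)) • (u i * u (2 * n - 1))) →
    ∀ ω : ExteriorAlgebra ℝ (Fin (2 * n) → ℝ),
    (ω = u 0 * u (2 * n - 1) + ∑ j ∈ Finset.Icc 1 (n - 1), u j * u (j + n - 1)) →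
    d ω = 0 ∧
    ω ^ n = (n.factorial : ℝ) •
      (u 0 * u (2 * n - 1) * ((List.range (n - 1)).map (fun j => u (j + 1) * u (j + n))).prod) ∧
    ω ^ n ≠ 0 := by
  intro u hu hd hd_first hd_last hd_low hd_high ω hω
  rw [← ι_natSingle_eq_dite] at hu
  subst hu
  beta_reduce at hd_first hd_last hd_low hd_high hω ⊢
  set e := natSingle ℝ (2 * n)
  have hpow : ω ^ n = (n.factorial : ℝ) •
      ((darbouxPairs n).map fun p => ι ℝ (e p.1) * ι ℝ (e p.2)).prod := by
    have h := sum_map_ι_mul_ι_pow_length ℝ e (darbouxPairs n)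
    rwa [length_darbouxPairs (by omega), ← Nat.cast_smul_eq_nsmul ℝ,
      sum_map_darbouxPairs fun i j => ι ℝ (e i) * ι ℝ (e j), ← hω] at h
  refine ⟨?_, ?_, ?_⟩
  · rw [hω, map_add, map_sum, hd, hd_first, hd_last, zero_mul, mul_zero, sub_zero, zero_add]
    refine Finset.sum_eq_zero fun j hj => ?_
    obtain ⟨hj_pos, hj_le⟩ := Finset.mem_Icc.mp hj
    have hd_partner := hd_high (j + n - 1) (by omega) (by omega)
    rw [show j + n - 1 - n + 2 = j + 1 by omega] at hd_partner
    exact map_ι_mul_ι_eq_zero_of_opposite_weights d hd _ (hd_low j hj_pos hj_le) hd_partner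
  · rw [hpow]
    simp only [darbouxPairs, List.map_cons, List.prod_cons, List.map_map]
    rfl
  · have h := prod_map_ι_ne_zero_of_linearIndepOn (linearIndepOn_natSingle ℝ (2 * n))
      (nodup_flatMap_darbouxPairs (by omega)) fun _ => lt_of_mem_flatMap_darbouxPairs (by omega)
    rw [← List.prod_map_mul_eq_prod_map_flatMap] at h
    rw [hpow]
    exact smul_ne_zero (by positivity) h
end
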